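/- arXiv:2208.02347 — 3 statements merged into one kernel-verified Lean document; each statement's English description precedes it below -/
import Mathlib

section
/- Under the hypotheses of the synchronous fixed point theorem with gcd(m, r) = 1 (complete metric space, closed covering sets, synchronous r-cyclic contraction with constant c), the unique fixed point x* lies in the intersection ⋂_{i=1}^m X_i; in particular this intersection is nonempty. -/
/-!
Since `r` is a unit of `ZMod m`, the indices `i + n • r` run through every residue class
infinitely often. Starting from any point, consecutive iterates lie in consecutive sets `X i`,
`X (i + r)`, so their distances decay geometrically and the orbit converges; its limit `x⋆` is a
limit of orbit points inside each closed `X j`, hence lies in `⋂ j, X j`. A point of the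
intersection can be paired with any point of the covering in the contraction inequality, so
`dist (f x) (f x⋆) ≤ c * dist x x⋆` for all `x`: this makes `f` continuous at `x⋆`, which is
therefore fixed, and forces every fixed point to equal `x⋆`.
-/

open Filter Function Set Topology

theorem ZMod.frequently_add_nsmul_eq {m : ℕ} [NeZero m] {r : ZMod m} (hr : IsUnit r)
    (i j : ZMod m) : ∃ᶠ n : ℕ in atTop, i + n • r = j := by
  obtain ⟨u, rfl⟩ := hr
  refine frequently_atTop.2 fun N => ⟨((j - i) * ↑u⁻¹).val + N * m, ?_, ?_⟩
  · nlinarith [NeZero.pos m]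
  · simp only [nsmul_eq_mul, Nat.cast_add, Nat.cast_mul, ZMod.natCast_self, mul_zero, add_zero,
      ZMod.natCast_zmod_val, mul_assoc, Units.inv_mul, mul_one, add_sub_cancel]

section Cyclic

variable {α ι : Type*} [AddMonoid ι] {X : ι → Set α} {f : α → α} {r : ι}

theorem iterate_mem_add_nsmul (hcyc : ∀ i, MapsTo f (X i) (X (i + r))) {i : ι} {x : α}
    (hx : x ∈ X i) (n : ℕ) : f^[n] x ∈ X (i + n • r) := by
  induction n with
  | zero => simpa using hx
  | succ n ih =>
    rw [iterate_succ_apply', succ_nsmul, ← add_assoc]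
    exact hcyc _ ih

theorem mem_of_tendsto_iterate [TopologicalSpace α] (hcyc : ∀ i, MapsTo f (X i) (X (i + r)))
    {i j : ι} (hvisit : ∃ᶠ n : ℕ in atTop, i + n • r = j) (hcl : IsClosed (X j)) {x z : α}
    (hx : x ∈ X i) (hlim : Tendsto (fun n => f^[n] x) atTop (𝓝 z)) : z ∈ X j :=
  hcl.mem_of_frequently_of_tendsto
    (hvisit.mono fun n hn => hn ▸ iterate_mem_add_nsmul hcyc hx n) hlim

variable [PseudoMetricSpace α] {c : ℝ}

theorem dist_iterate_succ_le_geometric (hcyc : ∀ i, MapsTo f (X i) (X (i + r)))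
    (hcontr : ∀ i, ∀ x ∈ X i, ∀ y ∈ X (i + r), dist (f x) (f y) ≤ c * dist x y)
    (hc0 : 0 ≤ c) {i : ι} {x : α} (hx : x ∈ X i) (n : ℕ) :
    dist (f^[n] x) (f^[n + 1] x) ≤ dist x (f x) * c ^ n := by
  induction n with
  | zero => simp
  | succ n ih =>
    have hnext : f^[n + 1] x ∈ X (i + n • r + r) := by
      simpa [succ_nsmul, add_assoc] using iterate_mem_add_nsmul hcyc hx (n + 1)
    calc dist (f^[n + 1] x) (f^[n + 2] x)
        = dist (f (f^[n] x)) (f (f^[n + 1] x)) := by simp only [iterate_succ_apply']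
      _ ≤ c * dist (f^[n] x) (f^[n + 1] x) :=
          hcontr _ _ (iterate_mem_add_nsmul hcyc hx n) _ hnext
      _ ≤ c * (dist x (f x) * c ^ n) := by gcongr
      _ = dist x (f x) * c ^ (n + 1) := by ring

theorem cauchySeq_iterate_of_cyclic (hcyc : ∀ i, MapsTo f (X i) (X (i + r)))
    (hcontr : ∀ i, ∀ x ∈ X i, ∀ y ∈ X (i + r), dist (f x) (f y) ≤ c * dist x y)
    (hc0 : 0 ≤ c) (hc1 : c < 1) {i : ι} {x : α} (hx : x ∈ X i) :
    CauchySeq fun n => f^[n] x :=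
  cauchySeq_of_le_geometric c _ hc1 (dist_iterate_succ_le_geometric hcyc hcontr hc0 hx)

theorem dist_apply_le_of_mem_iInter (hcov : ⋃ i, X i = univ)
    (hcontr : ∀ i, ∀ x ∈ X i, ∀ y ∈ X (i + r), dist (f x) (f y) ≤ c * dist x y) {z : α}
    (hz : z ∈ ⋂ i, X i) (x : α) : dist (f x) (f z) ≤ c * dist x z := by
  obtain ⟨i, hi⟩ := mem_iUnion.1 (hcov ▸ mem_univ x)
  exact hcontr i x hi z (mem_iInter.1 hz _)

end Cyclic

section PointwiseContraction

variable {α : Type*} [PseudoMetricSpace α] {f : α → α} {c : ℝ} {z : α}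

theorem continuousAt_of_dist_apply_le (hz : ∀ x, dist (f x) (f z) ≤ c * dist x z) :
    ContinuousAt f z := by
  rw [ContinuousAt, tendsto_iff_dist_tendsto_zero]
  refine squeeze_zero (fun _ => dist_nonneg) hz ?_
  simpa using ((tendsto_id (x := 𝓝 z)).dist (tendsto_const_nhds (x := z))).const_mul c

theorem dist_eq_zero_of_isFixedPt_of_dist_apply_le (hc1 : c < 1)
    (hz : ∀ x, dist (f x) (f z) ≤ c * dist x z) (hfz : IsFixedPt f z) {y : α}
    (hfy : IsFixedPt f y) : dist y z = 0 := by
  have hle : dist y z ≤ c * dist y z := by simpa only [hfy.eq, hfz.eq] using hz y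
  nlinarith [dist_nonneg (x := y) (y := z)]

end PointwiseContraction

theorem synchronous_fixed_point_in_intersection_general {α : Type*} [MetricSpace α] [CompleteSpace α]
    (m r : ℕ) (hm : 2 ≤ m) (hgcd : Nat.gcd m r = 1)
    (X : ZMod m → Set α) (hne : ∀ i, (X i).Nonempty) (hcl : ∀ i, IsClosed (X i))
    (hcov : (⋃ i, X i) = Set.univ) (f : α → α)
    (hcyc : ∀ i, ∀ x ∈ X i, f x ∈ X (i + (r : ZMod m)))
    (c : ℝ) (hc0 : 0 ≤ c) (hc1 : c < 1)
    (hcontr : ∀ i, ∀ x ∈ X i, ∀ y ∈ X (i + (r : ZMod m)),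
      dist (f x) (f y) ≤ c * dist x y) :
    ∃ xs : α, f xs = xs ∧ (∀ y, f y = y → y = xs) ∧ xs ∈ ⋂ i, X i := by
  have : NeZero m := ⟨by omega⟩
  have hr : IsUnit (r : ZMod m) := (ZMod.isUnit_iff_coprime r m).2 (Nat.Coprime.symm hgcd)
  obtain ⟨x, hx⟩ := hne 0
  obtain ⟨xs, hlim⟩ :=
    cauchySeq_tendsto_of_complete (cauchySeq_iterate_of_cyclic hcyc hcontr hc0 hc1 hx)
  have hxs : xs ∈ ⋂ i, X i := mem_iInter.2 fun j =>
    mem_of_tendsto_iterate hcyc (ZMod.frequently_add_nsmul_eq hr 0 j) (hcl j) hx hlim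
  have hLip := dist_apply_le_of_mem_iInter hcov hcontr hxs
  have hfix : IsFixedPt f xs :=
    isFixedPt_of_tendsto_iterate hlim (continuousAt_of_dist_apply_le hLip)
  refine ⟨xs, hfix, fun y hy => ?_, hxs⟩
  exact dist_eq_zero.1 (dist_eq_zero_of_isFixedPt_of_dist_apply_le hc1 hLip hfix hy)

theorem synchronous_fixed_point_in_intersection {α : Type*} [MetricSpace α] [CompleteSpace α]
    (m r : ℕ) (hm : 2 ≤ m) (hr : 1 ≤ r) (hrm : r < m) (hgcd : Nat.gcd m r = 1)
    (X : ZMod m → Set α) (hne : ∀ i, (X i).Nonempty) (hcl : ∀ i, IsClosed (X i))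
    (hcov : (⋃ i, X i) = Set.univ) (f : α → α)
    (hcyc : ∀ i, ∀ x ∈ X i, f x ∈ X (i + (r : ZMod m)))
    (c : ℝ) (hc0 : 0 ≤ c) (hc1 : c < 1)
    (hcontr : ∀ i, ∀ x ∈ X i, ∀ y ∈ X (i + (r : ZMod m)),
      dist (f x) (f y) ≤ c * dist x y) :
    ∃ xs : α, f xs = xs ∧ (∀ y, f y = y → y = xs) ∧ xs ∈ ⋂ i, X i :=
  synchronous_fixed_point_in_intersection_general m r hm hgcd X hne hcl hcov f hcyc c hc0 hc1 hcontr
end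

section
/- Let (X, d) be a complete metric space, X = X_1 ∪ ... ∪ X_m (m ≥ 3) a covering by nonempty closed sets, and f : X → X an asynchronous 2-cyclic contraction with constant c ∈ [0,1): f(X_i) ⊆ X_{i+2} for all i (indices mod m) and d(f(x), f(y)) ≤ c·d(x, y) for all x ∈ X_i, y ∈ X_{i+1}. Then f has a unique fixed point x* ∈ ⋂_{i=1}^m X_i, and the Picard iteration starting from any point of X converges to x* (f is a Picard operator). -/
/-!
Call `x` and `y` consecutive if `x ∈ X i` and `y ∈ X (i + 1)` for some `i`. A cyclic map sends
consecutive points to consecutive points and contracts their distance, so the orbits of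
consecutive points approach each other geometrically. Choosing `x ∈ X 0` and `z ∈ X 1`, the chain
`x, z, f x` of consecutive points bounds `dist (f^[n] x) (f^[n+1] x)` by a geometric sequence, so
the orbit of `x` converges to some `p`, and so does the orbit of `z`. These two orbits visit every
`X (2n)` and every `X (2n + 1)` infinitely often, so by closedness `p` lies in every `X i`. Then
every point is consecutive to `p`, which makes `f` Lipschitz at `p` (so `p` is fixed) and pulls
every orbit to `p`.
-/

open Filter Topology Set Function

def ConsecutiveIn {ι α : Type*} [Add ι] [One ι] (X : ι → Set α) (x y : α) : Prop :=
  ∃ i, x ∈ X i ∧ y ∈ X (i + 1)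

section CyclicMaps

variable {ι α : Type*} {X : ι → Set α} {f : α → α} {r : ι}

theorem ConsecutiveIn.map [AddCommSemigroup ι] [One ι] (hf : ∀ i, MapsTo f (X i) (X (i + r)))
    {x y : α} (h : ConsecutiveIn X x y) : ConsecutiveIn X (f x) (f y) := by
  obtain ⟨i, hx, hy⟩ := h
  exact ⟨i + r, hf i hx, add_right_comm i 1 r ▸ hf (i + 1) hy⟩

theorem mapsTo_iterate_add_nsmul [AddMonoid ι] (hf : ∀ i, MapsTo f (X i) (X (i + r)))
    (n : ℕ) (i : ι) : MapsTo f^[n] (X i) (X (i + n • r)) := by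
  induction n with
  | zero => simpa using mapsTo_id (X i)
  | succ n ih =>
    rw [iterate_succ', succ_nsmul, ← add_assoc]
    exact (hf _).comp ih

theorem mem_of_tendsto_iterate_s11 [TopologicalSpace α] {m : ℕ} [NeZero m] {X : ZMod m → Set α}
    {r : ZMod m} (hcl : ∀ i, IsClosed (X i)) (hf : ∀ i, MapsTo f (X i) (X (i + r)))
    {i : ZMod m} {x p : α} (hx : x ∈ X i) (hp : Tendsto (f^[·] x) atTop (𝓝 p)) (n : ℕ) :
    p ∈ X (i + n • r) := by
  refine (hcl _).mem_of_frequently_of_tendsto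
    (frequently_atTop.2 fun a => ⟨n + a * m, ?_, ?_⟩) hp
  · nlinarith [NeZero.one_le (n := m)]
  · have hperiod : (n + a * m) • r = n • r := by simp [nsmul_eq_mul]
    simpa [hperiod] using mapsTo_iterate_add_nsmul hf (n + a * m) i hx

theorem ZMod.exists_eq_nsmul_two_or_eq_one_add_nsmul_two {m : ℕ} [NeZero m] (j : ZMod m) :
    ∃ n : ℕ, j = n • 2 ∨ j = 1 + n • 2 := by
  obtain ⟨n, hn | hn⟩ := Nat.even_or_odd' j.val
  · exact ⟨n, .inl (by rw [← ZMod.natCast_zmod_val j, hn, nsmul_eq_mul]; push_cast; ring)⟩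
  · exact ⟨n, .inr (by rw [← ZMod.natCast_zmod_val j, hn, nsmul_eq_mul]; push_cast; ring)⟩

end CyclicMaps

section InvariantRelation

variable {α : Type*} [PseudoMetricSpace α] {f : α → α} {R : α → α → Prop} {c : ℝ}

theorem dist_iterate_le_of_rel (hc0 : 0 ≤ c) (hR : ∀ ⦃x y⦄, R x y → R (f x) (f y))
    (hf : ∀ ⦃x y⦄, R x y → dist (f x) (f y) ≤ c * dist x y) {x y : α} (h : R x y)
    (n : ℕ) : dist (f^[n] x) (f^[n] y) ≤ c ^ n * dist x y := by
  induction n generalizing x y with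
  | zero => simp
  | succ n ih =>
    calc dist (f^[n + 1] x) (f^[n + 1] y) ≤ c ^ n * dist (f x) (f y) := ih (hR h)
      _ ≤ c ^ n * (c * dist x y) := by gcongr; exact hf h
      _ = c ^ (n + 1) * dist x y := by ring

theorem tendsto_iterate_iff_of_rel (hc0 : 0 ≤ c) (hc1 : c < 1)
    (hR : ∀ ⦃x y⦄, R x y → R (f x) (f y))
    (hf : ∀ ⦃x y⦄, R x y → dist (f x) (f y) ≤ c * dist x y) {x y p : α} (h : R x y) :
    Tendsto (f^[·] x) atTop (𝓝 p) ↔ Tendsto (f^[·] y) atTop (𝓝 p) := by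
  refine tendsto_iff_of_dist (squeeze_zero (fun _ => dist_nonneg)
    (dist_iterate_le_of_rel hc0 hR hf h) ?_)
  simpa using (tendsto_pow_atTop_nhds_zero_of_lt_one hc0 hc1).mul_const (dist x y)

theorem cauchySeq_iterate_of_rel (hc0 : 0 ≤ c) (hc1 : c < 1)
    (hR : ∀ ⦃x y⦄, R x y → R (f x) (f y))
    (hf : ∀ ⦃x y⦄, R x y → dist (f x) (f y) ≤ c * dist x y) {x y : α} (hxy : R x y)
    (hyfx : R y (f x)) : CauchySeq (f^[·] x) := by
  refine cauchySeq_of_le_geometric c (dist x y + dist y (f x)) hc1 fun n => ?_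
  calc dist (f^[n] x) (f^[n + 1] x)
      ≤ dist (f^[n] x) (f^[n] y) + dist (f^[n] y) (f^[n] (f x)) := by
        rw [iterate_succ_apply]; exact dist_triangle _ _ _
    _ ≤ c ^ n * dist x y + c ^ n * dist y (f x) :=
        add_le_add (dist_iterate_le_of_rel hc0 hR hf hxy n)
          (dist_iterate_le_of_rel hc0 hR hf hyfx n)
    _ = (dist x y + dist y (f x)) * c ^ n := by ring

end InvariantRelation

theorem asynchronous_two_cyclic_contraction_Picard {α : Type*} [MetricSpace α] [CompleteSpace α]
    (m : ℕ) (hm : 3 ≤ m)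
    (X : ZMod m → Set α) (hne : ∀ i, (X i).Nonempty) (hcl : ∀ i, IsClosed (X i))
    (hcov : (⋃ i, X i) = Set.univ) (f : α → α)
    (hcyc : ∀ i, ∀ x ∈ X i, f x ∈ X (i + 2))
    (c : ℝ) (hc0 : 0 ≤ c) (hc1 : c < 1)
    (hcontr : ∀ i, ∀ x ∈ X i, ∀ y ∈ X (i + 1), dist (f x) (f y) ≤ c * dist x y) :
    ∃ xs : α, f xs = xs ∧ xs ∈ (⋂ i, X i) ∧ (∀ y, f y = y → y = xs) ∧
      ∀ x₀ : α, Tendsto (fun n => f^[n] x₀) atTop (𝓝 xs) := by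
  have : NeZero m := ⟨by omega⟩
  have hmap : ∀ ⦃x y⦄, ConsecutiveIn X x y → ConsecutiveIn X (f x) (f y) :=
    fun _ _ h => h.map hcyc
  have hdist : ∀ ⦃x y⦄, ConsecutiveIn X x y → dist (f x) (f y) ≤ c * dist x y := by
    rintro x y ⟨i, hx, hy⟩
    exact hcontr i x hx y hy
  obtain ⟨x, hx⟩ := hne 0
  obtain ⟨z, hz⟩ := hne 1
  have hxz : ConsecutiveIn X x z := ⟨0, hx, by rwa [zero_add]⟩
  have hzfx : ConsecutiveIn X z (f x) :=
    ⟨1, hz, by simpa [one_add_one_eq_two] using hcyc 0 x hx⟩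
  obtain ⟨p, hp⟩ :=
    cauchySeq_tendsto_of_complete (cauchySeq_iterate_of_rel hc0 hc1 hmap hdist hxz hzfx)
  have hzp := (tendsto_iterate_iff_of_rel hc0 hc1 hmap hdist hxz).1 hp
  have hmem : ∀ j, p ∈ X j := by
    intro j
    obtain ⟨n, rfl | rfl⟩ := ZMod.exists_eq_nsmul_two_or_eq_one_add_nsmul_two j
    · simpa using mem_of_tendsto_iterate_s11 hcl hcyc hx hp n
    · exact mem_of_tendsto_iterate_s11 hcl hcyc hz hzp n
  have hconsec : ∀ y, ConsecutiveIn X y p := fun y => by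
    obtain ⟨i, hi⟩ := mem_iUnion.1 (hcov ▸ mem_univ y)
    exact ⟨i, hi, hmem _⟩
  have hfix : IsFixedPt f p := isFixedPt_of_tendsto_iterate hp
    (continuousAt_of_locally_lipschitz one_pos c fun y _ => hdist (hconsec y))
  have hconv : ∀ y, Tendsto (f^[·] y) atTop (𝓝 p) := fun y =>
    (tendsto_iterate_iff_of_rel hc0 hc1 hmap hdist (hconsec y)).2 (by simp [iterate_fixed hfix])
  refine ⟨p, hfix, mem_iInter.2 hmem, fun y hy => tendsto_nhds_unique ?_ (hconv y), hconv⟩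
  simp [iterate_fixed hy]
end

section
/- Let f : X → X be an asynchronous 2-cyclic contraction with constant c ∈ [0,1) with respect to X = X_1 ∪ ... ∪ X_m. If x₀ ∈ X_1 and y₀ ∈ X_2, and x_n = f^n(x₀), y_n = f^n(y₀), then for all n ≥ 0: d(x_n, y_n) ≤ c^n·d(x₀, y₀) and d(y_n, x_{n+1}) ≤ c^n·d(y₀, x₁); consequently d(x_n, x_{n+1}) ≤ c^n·(d(x₀, y₀) + d(y₀, x₁)) for all n ≥ 1, and (x_n) is a Cauchy sequence. -/
/-!
Both orbits advance two pieces per step, so `f^[n] x₀` and `f^[n] y₀` always lie in adjacent pieces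
`X (1 + 2n)` and `X (2 + 2n)`, and so do `f^[n] y₀` and `f^[n + 1] x₀`. The contraction condition
therefore applies at every step to both pairs, giving the two geometric bounds; the triangle
inequality through `f^[n] y₀` bounds the steps of `(f^[n] x₀)` geometrically, which makes it Cauchy.
-/

open Function

section CyclicOrbit

variable {α ι : Type*} [AddCommMonoid ι] {X : ι → Set α} {f : α → α} {a : ι}

theorem iterate_mem_of_forall_mem_add (hcyc : ∀ i, ∀ x ∈ X i, f x ∈ X (i + a))
    {i : ι} {x : α} (hx : x ∈ X i) (n : ℕ) : f^[n] x ∈ X (i + n • a) := by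
  induction n with
  | zero => simpa using hx
  | succ n ih =>
    rw [iterate_succ_apply', succ_nsmul, ← add_assoc]
    exact hcyc _ _ ih

theorem dist_iterate_le_of_mem_add [PseudoMetricSpace α] {b : ι} {c : ℝ} (hc0 : 0 ≤ c)
    (hcyc : ∀ i, ∀ x ∈ X i, f x ∈ X (i + a))
    (hcontr : ∀ i, ∀ x ∈ X i, ∀ y ∈ X (i + b), dist (f x) (f y) ≤ c * dist x y)
    {i : ι} {x y : α} (hx : x ∈ X i) (hy : y ∈ X (i + b)) (n : ℕ) :
    dist (f^[n] x) (f^[n] y) ≤ c ^ n * dist x y := by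
  induction n with
  | zero => simp
  | succ n ih =>
    have hyn : f^[n] y ∈ X (i + n • a + b) := by
      simpa only [add_right_comm] using iterate_mem_of_forall_mem_add hcyc hy n
    rw [iterate_succ_apply', iterate_succ_apply']
    calc dist (f (f^[n] x)) (f (f^[n] y))
        ≤ c * dist (f^[n] x) (f^[n] y) :=
          hcontr _ _ (iterate_mem_of_forall_mem_add hcyc hx n) _ hyn
      _ ≤ c * (c ^ n * dist x y) := mul_le_mul_of_nonneg_left ih hc0
      _ = c ^ (n + 1) * dist x y := by ring

end CyclicOrbit

theorem asynchronous_two_cyclic_orbit_estimates_general {α : Type*} [MetricSpace α]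
    (m : ℕ)
    (X : ZMod m → Set α) (f : α → α)
    (hcyc : ∀ i, ∀ x ∈ X i, f x ∈ X (i + 2))
    (c : ℝ) (hc0 : 0 ≤ c) (hc1 : c < 1)
    (hcontr : ∀ i, ∀ x ∈ X i, ∀ y ∈ X (i + 1), dist (f x) (f y) ≤ c * dist x y)
    (x₀ y₀ : α) (hx₀ : x₀ ∈ X 1) (hy₀ : y₀ ∈ X 2) :
    (∀ n : ℕ, dist (f^[n] x₀) (f^[n] y₀) ≤ c ^ n * dist x₀ y₀) ∧
    (∀ n : ℕ, dist (f^[n] y₀) (f^[n + 1] x₀) ≤ c ^ n * dist y₀ (f x₀)) ∧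
    (∀ n : ℕ, 1 ≤ n →
      dist (f^[n] x₀) (f^[n + 1] x₀) ≤ c ^ n * (dist x₀ y₀ + dist y₀ (f x₀))) ∧
    CauchySeq (fun n => f^[n] x₀) := by
  have hxy (n : ℕ) : dist (f^[n] x₀) (f^[n] y₀) ≤ c ^ n * dist x₀ y₀ :=
    dist_iterate_le_of_mem_add hc0 hcyc hcontr hx₀ (by rwa [one_add_one_eq_two]) n
  have hyx (n : ℕ) : dist (f^[n] y₀) (f^[n + 1] x₀) ≤ c ^ n * dist y₀ (f x₀) := by
    rw [iterate_succ_apply]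
    exact dist_iterate_le_of_mem_add hc0 hcyc hcontr hy₀
      (by simpa only [add_comm] using hcyc _ _ hx₀) n
  have hstep (n : ℕ) :
      dist (f^[n] x₀) (f^[n + 1] x₀) ≤ c ^ n * (dist x₀ y₀ + dist y₀ (f x₀)) :=
    calc dist (f^[n] x₀) (f^[n + 1] x₀)
        ≤ dist (f^[n] x₀) (f^[n] y₀) + dist (f^[n] y₀) (f^[n + 1] x₀) := dist_triangle _ _ _
      _ ≤ c ^ n * dist x₀ y₀ + c ^ n * dist y₀ (f x₀) := add_le_add (hxy n) (hyx n)
      _ = c ^ n * (dist x₀ y₀ + dist y₀ (f x₀)) := by ring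
  refine ⟨hxy, hyx, fun n _ => hstep n, ?_⟩
  exact cauchySeq_of_le_geometric c _ hc1 fun n => (hstep n).trans_eq (mul_comm _ _)

theorem asynchronous_two_cyclic_orbit_estimates {α : Type*} [MetricSpace α]
    (m : ℕ) (hm : 3 ≤ m)
    (X : ZMod m → Set α) (hne : ∀ i, (X i).Nonempty)
    (hcov : (⋃ i, X i) = Set.univ) (f : α → α)
    (hcyc : ∀ i, ∀ x ∈ X i, f x ∈ X (i + 2))
    (c : ℝ) (hc0 : 0 ≤ c) (hc1 : c < 1)
    (hcontr : ∀ i, ∀ x ∈ X i, ∀ y ∈ X (i + 1), dist (f x) (f y) ≤ c * dist x y)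
    (x₀ y₀ : α) (hx₀ : x₀ ∈ X 1) (hy₀ : y₀ ∈ X 2) :
    (∀ n : ℕ, dist (f^[n] x₀) (f^[n] y₀) ≤ c ^ n * dist x₀ y₀) ∧
    (∀ n : ℕ, dist (f^[n] y₀) (f^[n + 1] x₀) ≤ c ^ n * dist y₀ (f x₀)) ∧
    (∀ n : ℕ, 1 ≤ n →
      dist (f^[n] x₀) (f^[n + 1] x₀) ≤ c ^ n * (dist x₀ y₀ + dist y₀ (f x₀))) ∧
    CauchySeq (fun n => f^[n] x₀) :=
  asynchronous_two_cyclic_orbit_estimates_general m X f hcyc c hc0 hc1 hcontr x₀ y₀ hx₀ hy₀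
end
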